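/- Let (P,<) be a finite poset and let (B,U) and (B',U') be two partitions of P, both satisfying: B and B' contain all deficit elements, U and U' contain all surplus elements (balanced elements distributed arbitrarily). Then e(B,U) = e(B',U'). -/

import Mathlib

open Finset
open scoped Classical

/-- `e X Y` counts pairs `(x,y)` with `x ∈ X`, `y ∈ Y`, `x < y`. -/
noncomputable def e {P : Type*} [Fintype P] [PartialOrder P] (X Y : Finset P) : ℕ :=
  ((X ×ˢ Y).filter fun p => p.1 < p.2).card

/-!
Write `imbalance v = e {v} P - e P {v}`, so deficit and surplus elements are those of positive
and negative imbalance. The imbalance is strictly antitone, so for a cut `(B, U)` as in the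
theorem no element of `U` lies below an element of `B`: `e U B = 0`. Counting the pairs leaving
and entering `B` gives `e B U - e U B = ∑ v ∈ B, imbalance v`, and the balanced elements
contribute nothing, hence `e B U` is the total positive imbalance, whatever the cut.
-/

section Cuts

variable {P : Type*} [Fintype P] [PartialOrder P]

lemma e_eq_sum_left (X Y : Finset P) : e X Y = ∑ x ∈ X, e {x} Y := by
  simp only [e, card_filter, sum_product, singleton_product, sum_map]
  rfl

lemma e_eq_sum_right (X Y : Finset P) : e X Y = ∑ y ∈ Y, e X {y} := by
  simp only [e, card_filter, sum_product_right, product_singleton, sum_map]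
  rfl

lemma e_singleton_left (v : P) (Y : Finset P) : e {v} Y = #{y ∈ Y | v < y} := by
  simp only [e, card_filter, singleton_product, sum_map]
  rfl

lemma e_singleton_right (X : Finset P) (v : P) : e X {v} = #{x ∈ X | x < v} := by
  simp only [e, card_filter, product_singleton, sum_map]
  rfl

lemma e_union_left {X Y : Finset P} (h : Disjoint X Y) (Z : Finset P) :
    e (X ∪ Y) Z = e X Z + e Y Z := by
  simp only [e_eq_sum_left (_ ∪ _), sum_union h, ← e_eq_sum_left]

lemma e_union_right (X : Finset P) {Y Z : Finset P} (h : Disjoint Y Z) :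
    e X (Y ∪ Z) = e X Y + e X Z := by
  simp only [e_eq_sum_right _ (_ ∪ _), sum_union h, ← e_eq_sum_right]

lemma e_singleton_left_lt_of_lt {u v : P} (huv : u < v) {Y : Finset P} (hv : v ∈ Y) :
    e {v} Y < e {u} Y := by
  rw [e_singleton_left, e_singleton_left]
  refine card_lt_card ((ssubset_iff_of_subset ?_).2 ⟨v, ?_, ?_⟩)
  · intro y
    simp only [mem_filter]
    exact And.imp_right huv.trans
  · simp [hv, huv]
  · simp

lemma e_singleton_right_lt_of_lt {u v : P} (huv : u < v) {X : Finset P} (hu : u ∈ X) :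
    e X {u} < e X {v} := by
  rw [e_singleton_right, e_singleton_right]
  refine card_lt_card ((ssubset_iff_of_subset ?_).2 ⟨u, ?_, ?_⟩)
  · intro x
    simp only [mem_filter]
    exact And.imp_right (·.trans huv)
  · simp [hu, huv]
  · simp

noncomputable def imbalance (v : P) : ℤ := e {v} univ - e univ {v}

lemma imbalance_strictAnti : StrictAnti (imbalance : P → ℤ) := fun u v huv => by
  have h₁ := e_singleton_left_lt_of_lt huv (mem_univ v)
  have h₂ := e_singleton_right_lt_of_lt huv (mem_univ u)
  unfold imbalance
  omega

lemma imbalance_pos_iff {v : P} : 0 < imbalance v ↔ e univ {v} < e {v} univ := by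
  simp [imbalance]

lemma imbalance_neg_iff {v : P} : imbalance v < 0 ↔ e {v} univ < e univ {v} := by
  simp [imbalance]

lemma e_eq_zero_of_imbalance_nonpos_of_nonneg {X Y : Finset P} (hX : ∀ x ∈ X, imbalance x ≤ 0)
    (hY : ∀ y ∈ Y, 0 ≤ imbalance y) : e X Y = 0 := by
  rw [e, card_eq_zero, filter_eq_empty_iff]
  rintro ⟨x, y⟩ hxy hlt
  rw [mem_product] at hxy
  have := imbalance_strictAnti hlt
  linarith [hX x hxy.1, hY y hxy.2]

lemma e_sub_e_eq_sum_imbalance {B U : Finset P} (h1 : Disjoint B U) (h2 : B ∪ U = univ) :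
    (e B U : ℤ) - e U B = ∑ v ∈ B, imbalance v := by
  have hout : e B univ = e B B + e B U := by rw [← h2, e_union_right _ h1]
  have hin : e univ B = e B B + e U B := by rw [← h2, e_union_left h1]
  have hsum : ∑ v ∈ B, imbalance v = e B univ - e univ B := by
    rw [e_eq_sum_left B, e_eq_sum_right _ B]
    push_cast
    exact sum_sub_distrib _ _
  omega

lemma e_eq_sum_pos_imbalance {B U : Finset P} (h1 : Disjoint B U) (h2 : B ∪ U = univ)
    (hB : ∀ v, 0 < imbalance v → v ∈ B) (hU : ∀ v, imbalance v < 0 → v ∈ U) :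
    (e B U : ℤ) = ∑ v : P with 0 < imbalance v, imbalance v := by
  have hB_nonneg (v : P) (hv : v ∈ B) : 0 ≤ imbalance v :=
    not_lt.1 fun h => disjoint_left.1 h1 hv (hU v h)
  have hU_nonpos (v : P) (hv : v ∈ U) : imbalance v ≤ 0 :=
    not_lt.1 fun h => disjoint_left.1 h1 (hB v h) hv
  have hcut := e_sub_e_eq_sum_imbalance h1 h2
  rw [e_eq_zero_of_imbalance_nonpos_of_nonneg hU_nonpos hB_nonneg, Nat.cast_zero,
    sub_zero] at hcut
  rw [hcut]
  refine (sum_subset (fun v hv => hB v (mem_filter.1 hv).2) fun v hvB hv => ?_).symm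
  simp only [mem_filter, mem_univ, true_and, not_lt] at hv
  exact le_antisymm hv (hB_nonneg v hvB)

end Cuts

/-- Any two cuts putting all deficit elements in `B` and all surplus elements in `U`
have the same size. -/
theorem cut_size_independent (P : Type*) [Fintype P] [PartialOrder P]
    (B U B' U' : Finset P)
    (h1 : Disjoint B U) (h2 : B ∪ U = Finset.univ)
    (h1' : Disjoint B' U') (h2' : B' ∪ U' = Finset.univ)
    (hd : ∀ v : P, e (Finset.univ : Finset P) {v} < e {v} (Finset.univ : Finset P) → v ∈ B)
    (hs : ∀ v : P, e {v} (Finset.univ : Finset P) < e (Finset.univ : Finset P) {v} → v ∈ U)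
    (hd' : ∀ v : P, e (Finset.univ : Finset P) {v} < e {v} (Finset.univ : Finset P) → v ∈ B')
    (hs' : ∀ v : P, e {v} (Finset.univ : Finset P) < e (Finset.univ : Finset P) {v} → v ∈ U') :
    e B U = e B' U' := by
  have hBU := e_eq_sum_pos_imbalance h1 h2
    (fun v h => hd v (imbalance_pos_iff.1 h)) (fun v h => hs v (imbalance_neg_iff.1 h))
  have hBU' := e_eq_sum_pos_imbalance h1' h2'
    (fun v h => hd' v (imbalance_pos_iff.1 h)) (fun v h => hs' v (imbalance_neg_iff.1 h))
  exact_mod_cast hBU.trans hBU'.symm
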